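/- arXiv:2404.01724 — 3 statements merged into one kernel-verified Lean document; each statement's English description precedes it below -/
import Mathlib

section
/- There exists a constant C > 0 such that for every function f in W^{1,2}(ℝ⁴) ∩ L^1(ℝ⁴) with f ≥ 0 almost everywhere and every N ≥ 1, one has ‖f‖_{3/2}^{3/2} ≤ (C / sqrt(log(1+N²))) · ‖(1+f)·log(1+f)‖_1^{1/2} · ∫_{ℝ⁴} |∇f|²/(1+f) dx + C · N^{1/2} · ‖f‖_1. -/
/-!
Split `∫ f ^ (3/2)` at the level `N`. Where `f ≤ N`, `f ^ (3/2) ≤ √N f`. On `{f > N}`,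
Cauchy–Schwarz bounds it by `(∫ f²)^(1/2) (∫ f)^(1/2)`, and Markov's inequality with the weight
`log (1 + f)` bounds `∫_{f > N} f` by the entropy over `log (1 + N) ≥ log (1 + N²) / 2`.
For `∫_{f ≥ 1} f²` put `g = √(1 + f) - 1`: there `f ≤ 16 g²`, while `‖∇g‖² ≤ ‖∇f‖² / (1 + f)`,
so the Sobolev inequality `‖g‖₄ ≤ K ‖∇g‖₂` on `ℝ⁴` bounds it by `(16 K² ∫ ‖∇f‖² / (1 + f))²`.

Mathlib's Sobolev inequalities assume `C¹`, but `g` is only differentiable. The fundamental theorem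
of calculus along coordinate lines and the grid-lines lemma still give Gagliardo–Nirenberg for
differentiable compactly supported `u`; applied to `u³` with Cauchy–Schwarz it yields
`‖u‖₄ ≤ 3 ‖∇u‖₂`, and the cutoffs `χ (x / k) g` together with Fatou's lemma remove the support
condition.
-/

open MeasureTheory Filter Set Function Topology
open scoped ENNReal NNReal

section GagliardoNirenberg

variable {F : Type*} [NormedAddCommGroup F] [NormedSpace ℝ F] [CompleteSpace F]

theorem HasCompactSupport.enorm_le_lintegral_enorm_deriv {f : ℝ → F} (hf : Differentiable ℝ f)
    (h2f : HasCompactSupport f) (x : ℝ) : ‖f x‖ₑ ≤ ∫⁻ y, ‖deriv f y‖ₑ := by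
  by_cases hfin : ∫⁻ y, ‖deriv f y‖ₑ = ∞
  · simp [hfin]
  have hint : Integrable (deriv f) := ⟨aestronglyMeasurable_deriv f _, lt_top_iff_ne_top.2 hfin⟩
  have hftc : ∫ y in Iic x, deriv f y = f x - 0 :=
    integral_Iic_of_hasDerivAt_of_tendsto' (fun y _ => (hf y).hasDerivAt) hint.integrableOn
      (h2f.is_zero_at_infty.mono_left atBot_le_cocompact)
  calc ‖f x‖ₑ = ‖∫ y in Iic x, deriv f y‖ₑ := by rw [hftc, sub_zero]
    _ ≤ ∫⁻ y in Iic x, ‖deriv f y‖ₑ := enorm_integral_le_lintegral_enorm _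
    _ ≤ ∫⁻ y, ‖deriv f y‖ₑ := setLIntegral_le_lintegral _ _

theorem lintegral_pow_le_pow_lintegral_fderiv_of_differentiable {ι : Type*} [Fintype ι]
    {p : ℝ} (hp : Real.HolderConjugate (Fintype.card ι) p) {u : (ι → ℝ) → F}
    (hu : Differentiable ℝ u) (h2u : HasCompactSupport u) :
    ∫⁻ x, ‖u x‖ₑ ^ p ≤ (∫⁻ x, ‖fderiv ℝ u x‖ₑ) ^ p := by
  classical
  set n : ℝ := (Fintype.card ι : ℝ)
  have hn : 1 < n := hp.lt
  have line : ∀ x i, ‖u x‖ₑ ≤ ∫⁻ t, ‖fderiv ℝ u (update x i t)‖ₑ := fun x i =>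
    calc ‖u x‖ₑ = ‖(u ∘ update x i) (x i)‖ₑ := by simp
      _ ≤ ∫⁻ t, ‖deriv (u ∘ update x i) t‖ₑ :=
        (h2u.comp_isClosedEmbedding (isClosedEmbedding_update x i)).enorm_le_lintegral_enorm_deriv
          (hu.comp fun t => (hasDerivAt_update x i t).differentiableAt) _
      _ ≤ ∫⁻ t, ‖fderiv ℝ u (update x i t)‖ₑ := by
        gcongr with t
        rw [fderiv_comp_deriv _ (hu _) (hasDerivAt_update x i t).differentiableAt,
          deriv_update]
        refine (ContinuousLinearMap.le_opENorm _ _).trans ?_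
        simp [Pi.enorm_single]
  calc ∫⁻ x, ‖u x‖ₑ ^ p = ∫⁻ x, ∏ _i : ι, ‖u x‖ₑ ^ (1 / (n - 1)) := by
        congr 1 with x
        rw [Finset.prod_const, Finset.card_univ, ← ENNReal.rpow_natCast, ← ENNReal.rpow_mul,
          hp.conjugate_eq]
        field_simp
        rfl
    _ ≤ ∫⁻ x, ∏ i, (∫⁻ t, ‖fderiv ℝ u (update x i t)‖ₑ) ^ (1 / (n - 1)) := by
        gcongr with x i
        exact line x i
    _ ≤ (∫⁻ x, ‖fderiv ℝ u x‖ₑ) ^ p := by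
        simpa [volume_pi] using
          lintegral_prod_lintegral_pow_le (fun _ => volume) hp (by fun_prop)

end GagliardoNirenberg

theorem lintegral_enorm_fderiv_pow_three_le {E : Type*} [NormedAddCommGroup E] [NormedSpace ℝ E]
    [MeasurableSpace E] [OpensMeasurableSpace E] {μ : Measure E} {u : E → ℝ}
    (hu : Differentiable ℝ u) :
    ∫⁻ x, ‖fderiv ℝ (fun y => u y ^ 3) x‖ₑ ∂μ ≤
      3 * (eLpNorm u 4 μ ^ 2 * eLpNorm (fderiv ℝ u) 2 μ) := by
  have hum : Measurable u := hu.continuous.measurable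
  have hv : ∀ x, HasFDerivAt (fun y => u y ^ 3) ((3 * u x ^ 2) • fderiv ℝ u x) x := fun x => by
    simpa using (hu x).hasFDerivAt.pow 3
  have hu4 : (∫⁻ x, (‖u x‖ₑ ^ (2 : ℝ)) ^ (2 : ℝ) ∂μ) ^ (1 / 2 : ℝ) = eLpNorm u 4 μ ^ 2 := by
    rw [eLpNorm_eq_lintegral_rpow_enorm_toReal (by norm_num) (by norm_num), ← ENNReal.rpow_natCast,
      ← ENNReal.rpow_mul]
    simp_rw [← ENNReal.rpow_mul]
    norm_num
  have hDu2 : (∫⁻ x, ‖fderiv ℝ u x‖ₑ ^ (2 : ℝ) ∂μ) ^ (1 / 2 : ℝ) = eLpNorm (fderiv ℝ u) 2 μ := by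
    rw [eLpNorm_eq_lintegral_rpow_enorm_toReal (by norm_num) (by norm_num)]
    norm_num
  calc ∫⁻ x, ‖fderiv ℝ (fun y => u y ^ 3) x‖ₑ ∂μ
      = ∫⁻ x, 3 * (‖u x‖ₑ ^ (2 : ℝ) * ‖fderiv ℝ u x‖ₑ) ∂μ := by
        congr 1 with x
        rw [(hv x).fderiv, enorm_smul, enorm_mul, enorm_pow, ENNReal.rpow_two, mul_assoc,
          Real.enorm_of_nonneg (by norm_num)]
        norm_num
    _ = 3 * ∫⁻ x, ‖u x‖ₑ ^ (2 : ℝ) * ‖fderiv ℝ u x‖ₑ ∂μ :=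
        lintegral_const_mul _ (by fun_prop)
    _ ≤ 3 * ((∫⁻ x, (‖u x‖ₑ ^ (2 : ℝ)) ^ (2 : ℝ) ∂μ) ^ (1 / 2 : ℝ) *
          (∫⁻ x, ‖fderiv ℝ u x‖ₑ ^ (2 : ℝ) ∂μ) ^ (1 / 2 : ℝ)) := by
        gcongr
        exact ENNReal.lintegral_mul_le_Lp_mul_Lq _ .two_two (by fun_prop) (by fun_prop)
    _ = 3 * (eLpNorm u 4 μ ^ 2 * eLpNorm (fderiv ℝ u) 2 μ) := by rw [hu4, hDu2]

theorem eLpNorm_four_le_three_mul_eLpNorm_fderiv_two {u : (Fin 4 → ℝ) → ℝ}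
    (hu : Differentiable ℝ u) (h2u : HasCompactSupport u) :
    eLpNorm u 4 volume ≤ 3 * eLpNorm (fderiv ℝ u) 2 volume := by
  set a := eLpNorm u 4 volume
  have ha_top : a ≠ ∞ := (hu.continuous.memLp_of_hasCompactSupport h2u).eLpNorm_ne_top
  rcases eq_or_ne a 0 with ha0 | ha0
  · simp [ha0]
  have hgns := lintegral_pow_le_pow_lintegral_fderiv_of_differentiable (p := 4 / 3)
    (u := fun x => u x ^ 3) (by norm_num [Real.holderConjugate_iff]) (hu.pow 3)
    (h2u.comp_left (g := fun t : ℝ => t ^ 3) (by simp))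
  have hlhs : ∫⁻ x, ‖u x ^ 3‖ₑ ^ (4 / 3 : ℝ) = a ^ (4 : ℝ) := by
    have ha : a ^ (4 : ℝ) = ∫⁻ x, ‖u x‖ₑ ^ (4 : ℝ) := by
      simpa using eLpNorm_nnreal_pow_eq_lintegral (f := u) (μ := volume) (p := 4) (by norm_num)
    rw [ha]
    congr 1 with x
    rw [enorm_pow, ← ENNReal.rpow_natCast, ← ENNReal.rpow_mul]
    norm_num
  have h4 : a ^ (4 : ℝ) ≤ (3 * (a ^ 2 * eLpNorm (fderiv ℝ u) 2 volume)) ^ (4 / 3 : ℝ) :=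
    hlhs ▸ hgns.trans (by gcongr; exact lintegral_enorm_fderiv_pow_three_le hu)
  have h3 : a ^ 2 * a ≤ a ^ 2 * (3 * eLpNorm (fderiv ℝ u) 2 volume) := by
    have := ENNReal.rpow_le_rpow h4 (by norm_num : (0 : ℝ) ≤ 3 / 4)
    rwa [← ENNReal.rpow_mul, ← ENNReal.rpow_mul, show (4 : ℝ) * (3 / 4) = (3 : ℕ) by norm_num,
      show (4 / 3 : ℝ) * (3 / 4) = 1 by norm_num, ENNReal.rpow_one, ENNReal.rpow_natCast,
      pow_succ, mul_left_comm] at this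
  exact (ENNReal.mul_le_mul_iff_right (pow_ne_zero _ ha0) (ENNReal.pow_ne_top ha_top)).1 h3

section Cutoff

variable {E : Type*} [NormedAddCommGroup E] [NormedSpace ℝ E]

theorem ContDiffBump.norm_fderiv_comp_smul_mul_le [HasContDiffBump E] {c : E}
    (χ : ContDiffBump c) {M : ℝ} (hM : ∀ y, ‖fderiv ℝ χ y‖ ≤ M) {g : E → ℝ} {x : E}
    (hg : DifferentiableAt ℝ g x) {a : ℝ} (ha : 0 ≤ a) :
    ‖fderiv ℝ (fun y => χ (a • y) * g y) x‖ ≤ ‖fderiv ℝ g x‖ + M * a * ‖g x‖ := by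
  have hχ : Differentiable ℝ χ := (χ.contDiff (n := 1)).differentiable one_ne_zero
  have hid : ‖a • ContinuousLinearMap.id ℝ E‖ ≤ a := by
    rw [norm_smul, Real.norm_of_nonneg ha]
    exact mul_le_of_le_one_right ha ContinuousLinearMap.norm_id_le
  have hχa : HasFDerivAt (fun y => χ (a • y))
      ((fderiv ℝ χ (a • x)).comp (a • ContinuousLinearMap.id ℝ E)) x :=
    (hχ _).hasFDerivAt.comp x ((hasFDerivAt_id x).const_smul a)
  have hd : HasFDerivAt (fun y => χ (a • y) * g y) _ x := hχa.mul hg.hasFDerivAt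
  rw [hd.fderiv]
  refine (norm_add_le _ _).trans (add_le_add ?_ ?_)
  · rw [norm_smul, Real.norm_of_nonneg χ.nonneg]
    exact mul_le_of_le_one_left (norm_nonneg _) χ.le_one
  · rw [norm_smul, mul_comm]
    gcongr
    exact (ContinuousLinearMap.opNorm_comp_le _ _).trans
      (mul_le_mul (hM _) hid (norm_nonneg _) ((norm_nonneg _).trans (hM 0)))

variable [FiniteDimensional ℝ E] [MeasurableSpace E] [BorelSpace E]

theorem eLpNorm_le_mul_eLpNorm_fderiv_of_forall_hasCompactSupport {μ : Measure E}
    {p q : ℝ≥0∞} {K : ℝ≥0} (hp : 1 ≤ p)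
    (hK : ∀ u : E → ℝ, Differentiable ℝ u → HasCompactSupport u →
      eLpNorm u q μ ≤ K * eLpNorm (fderiv ℝ u) p μ)
    {g : E → ℝ} (hg : Differentiable ℝ g) (hgp : MemLp g p μ) :
    eLpNorm g q μ ≤ K * eLpNorm (fderiv ℝ g) p μ := by
  let χ : ContDiffBump (0 : E) := ⟨1, 2, one_pos, one_lt_two⟩
  obtain ⟨M, hM⟩ := (χ.hasCompactSupport.fderiv ℝ).exists_bound_of_continuous
    ((χ.contDiff (n := 1)).continuous_fderiv one_ne_zero)
  have hM0 : 0 ≤ M := (norm_nonneg _).trans (hM 0)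
  set c : ℕ → ℝ := fun k => 1 / (k + 1)
  have hc : ∀ k, 0 < c k := fun k => by positivity
  have hc0 : Tendsto c atTop (𝓝 0) := tendsto_one_div_add_atTop_nhds_zero_nat
  set u : ℕ → E → ℝ := fun k x => χ (c k • x) * g x
  have hud : ∀ k, Differentiable ℝ (u k) := fun k =>
    (((χ.contDiff (n := 1)).differentiable one_ne_zero).comp
      (differentiable_id.const_smul (c k))).mul hg
  have hlim : ∀ x, Tendsto (fun k => u k x) atTop (𝓝 (g x)) := fun x => by
    have hcx : Tendsto (fun k => c k • x) atTop (𝓝 0) := by simpa using hc0.smul_const x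
    refine tendsto_const_nhds.congr' ((hcx.eventually χ.eventuallyEq_one).mono fun k hk => ?_)
    simp [u, hk]
  have hbound : ∀ k, eLpNorm (u k) q μ ≤
      K * (eLpNorm (fderiv ℝ g) p μ + ENNReal.ofReal (M * c k) * eLpNorm g p μ) := fun k => by
    refine (hK _ (hud k) (χ.hasCompactSupport.comp_smul (hc k).ne').mul_right).trans ?_
    gcongr
    calc eLpNorm (fderiv ℝ (u k)) p μ
        ≤ eLpNorm ((fun x => ‖fderiv ℝ g x‖) + (M * c k) • fun x => ‖g x‖) p μ :=
          eLpNorm_mono_real fun x => by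
            simpa using χ.norm_fderiv_comp_smul_mul_le hM (hg x) (hc k).le
      _ ≤ eLpNorm (fun x => ‖fderiv ℝ g x‖) p μ +
            eLpNorm ((M * c k) • fun x => ‖g x‖) p μ :=
          eLpNorm_add_le (measurable_fderiv ℝ g).norm.aestronglyMeasurable
            (hgp.1.norm.const_smul _) hp
      _ = eLpNorm (fderiv ℝ g) p μ + ENNReal.ofReal (M * c k) * eLpNorm g p μ := by
          rw [eLpNorm_norm, eLpNorm_const_smul, eLpNorm_norm,
            Real.enorm_of_nonneg (mul_nonneg hM0 (hc k).le)]
  have htend : Tendsto (fun k => K * (eLpNorm (fderiv ℝ g) p μ +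
      ENNReal.ofReal (M * c k) * eLpNorm g p μ)) atTop (𝓝 (K * eLpNorm (fderiv ℝ g) p μ)) := by
    have h0 : Tendsto (fun k => ENNReal.ofReal (M * c k)) atTop (𝓝 0) := by
      simpa using ENNReal.tendsto_ofReal (hc0.const_mul M)
    simpa using ENNReal.Tendsto.const_mul (tendsto_const_nhds.add
      (ENNReal.Tendsto.mul_const h0 (.inr hgp.eLpNorm_ne_top))) (.inr ENNReal.coe_ne_top)
  calc eLpNorm g q μ ≤ liminf (fun k => eLpNorm (u k) q μ) atTop :=
        Lp.eLpNorm_lim_le_liminf_eLpNorm (fun k => (hud k).continuous.aestronglyMeasurable) g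
          (ae_of_all _ hlim)
    _ ≤ liminf (fun k => K * (eLpNorm (fderiv ℝ g) p μ +
          ENNReal.ofReal (M * c k) * eLpNorm g p μ)) atTop :=
        liminf_le_liminf (Eventually.of_forall hbound)
    _ = K * eLpNorm (fderiv ℝ g) p μ := htend.liminf_eq

theorem EuclideanSpace.exists_eLpNorm_four_le_mul_eLpNorm_fderiv_two :
    ∃ K : ℝ≥0, ∀ g : EuclideanSpace ℝ (Fin 4) → ℝ, Differentiable ℝ g → MemLp g 2 →
      eLpNorm g 4 volume ≤ K * eLpNorm (fderiv ℝ g) 2 volume := by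
  let e : (Fin 4 → ℝ) ≃L[ℝ] EuclideanSpace ℝ (Fin 4) := (EuclideanSpace.equiv (Fin 4) ℝ).symm
  have he : MeasurePreserving e := PiLp.volume_preserving_toLp (Fin 4)
  refine ⟨3 * ‖(e : (Fin 4 → ℝ) →L[ℝ] EuclideanSpace ℝ (Fin 4))‖₊, fun g hg hg2 =>
    eLpNorm_le_mul_eLpNorm_fderiv_of_forall_hasCompactSupport one_le_two ?_ hg hg2⟩
  intro u hu h2u
  have hDu : ∀ y, fderiv ℝ (u ∘ e) y =
      (fderiv ℝ u (e y)).comp (e : (Fin 4 → ℝ) →L[ℝ] EuclideanSpace ℝ (Fin 4)) := fun y =>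
    ((hu _).hasFDerivAt.comp y e.hasFDerivAt).fderiv
  calc eLpNorm u 4 volume = eLpNorm (u ∘ e) 4 volume :=
        (eLpNorm_comp_measurePreserving hu.continuous.aestronglyMeasurable he).symm
    _ ≤ 3 * eLpNorm (fderiv ℝ (u ∘ e)) 2 volume :=
        eLpNorm_four_le_three_mul_eLpNorm_fderiv_two (hu.comp e.differentiable)
          (h2u.comp_homeomorph e.toHomeomorph)
    _ ≤ 3 * (‖(e : (Fin 4 → ℝ) →L[ℝ] EuclideanSpace ℝ (Fin 4))‖₊ •
          eLpNorm (fderiv ℝ u ∘ e) 2 volume) := by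
        gcongr
        refine eLpNorm_le_nnreal_smul_eLpNorm_of_ae_le_mul (ae_of_all _ fun y => ?_) _
        rw [hDu, mul_comm]
        exact ContinuousLinearMap.opNNNorm_comp_le _ _
    _ = _ := by
        rw [eLpNorm_comp_measurePreserving (measurable_fderiv ℝ u).aestronglyMeasurable he,
          ENNReal.smul_def, smul_eq_mul, ENNReal.coe_mul, ENNReal.coe_ofNat, mul_assoc]

theorem ENNReal.ofReal_sqrt (t : ℝ) : ENNReal.ofReal √t = ENNReal.ofReal t ^ (1 / 2 : ℝ) := by
  rcases le_total 0 t with ht | ht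
  · rw [ENNReal.ofReal_rpow_of_nonneg ht (by norm_num), Real.sqrt_eq_rpow]
  · rw [Real.sqrt_eq_zero'.2 ht, ENNReal.ofReal_of_nonpos ht,
      ENNReal.zero_rpow_of_pos (by norm_num), ENNReal.ofReal_zero]

section LevelSets

variable {α : Type*} [MeasurableSpace α] (μ : Measure α)

theorem lintegral_ofReal_rpow_three_halves_le {f : α → ℝ} (hf : Measurable f) (hf0 : ∀ x, 0 ≤ f x)
    (N : ℝ) :
    ∫⁻ x, ENNReal.ofReal (f x ^ (3 / 2 : ℝ)) ∂μ ≤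
      (∫⁻ x in {x | N < f x}, ENNReal.ofReal (f x) ^ 2 ∂μ) ^ (1 / 2 : ℝ) *
        (∫⁻ x in {x | N < f x}, ENNReal.ofReal (f x) ∂μ) ^ (1 / 2 : ℝ) +
      ENNReal.ofReal N ^ (1 / 2 : ℝ) * ∫⁻ x, ENNReal.ofReal (f x) ∂μ := by
  set S := {x | N < f x}
  have hφ : Measurable fun x => ENNReal.ofReal (f x) := hf.ennreal_ofReal
  have hsplit : ∀ x, ENNReal.ofReal (f x ^ (3 / 2 : ℝ)) =
      ENNReal.ofReal (f x) * ENNReal.ofReal (f x) ^ (1 / 2 : ℝ) := fun x => by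
    rw [← ENNReal.ofReal_rpow_of_nonneg (hf0 x) (by norm_num),
      show (3 / 2 : ℝ) = 1 + 1 / 2 by norm_num, ENNReal.rpow_add_of_nonneg _ _ zero_le_one (by norm_num), ENNReal.rpow_one]
  rw [← lintegral_add_compl _ (measurableSet_lt measurable_const hf)]
  gcongr ?_ + ?_
  · calc ∫⁻ x in S, ENNReal.ofReal (f x ^ (3 / 2 : ℝ)) ∂μ
        = ∫⁻ x in S, ((fun x => ENNReal.ofReal (f x)) *
            fun x => ENNReal.ofReal (f x) ^ (1 / 2 : ℝ)) x ∂μ := lintegral_congr hsplit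
      _ ≤ (∫⁻ x in S, ENNReal.ofReal (f x) ^ (2 : ℝ) ∂μ) ^ (1 / 2 : ℝ) *
            (∫⁻ x in S, (ENNReal.ofReal (f x) ^ (1 / 2 : ℝ)) ^ (2 : ℝ) ∂μ) ^ (1 / 2 : ℝ) :=
          ENNReal.lintegral_mul_le_Lp_mul_Lq _ .two_two hφ.aemeasurable
            (hφ.pow_const _).aemeasurable
      _ = _ := by simp_rw [← ENNReal.rpow_mul]; norm_num
  · calc ∫⁻ x in Sᶜ, ENNReal.ofReal (f x ^ (3 / 2 : ℝ)) ∂μ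
        ≤ ∫⁻ x in Sᶜ, ENNReal.ofReal N ^ (1 / 2 : ℝ) * ENNReal.ofReal (f x) ∂μ := by
          refine setLIntegral_mono (hφ.const_mul _) fun x hx => ?_
          rw [hsplit, mul_comm]
          gcongr
          exact not_lt.1 hx
      _ ≤ ENNReal.ofReal N ^ (1 / 2 : ℝ) * ∫⁻ x, ENNReal.ofReal (f x) ∂μ := by
          rw [lintegral_const_mul _ hφ]
          gcongr
          exact Measure.restrict_le_self

theorem integral_rpow_three_halves_le {f : α → ℝ} (hf : Measurable f) (hf0 : ∀ x, 0 ≤ f x)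
    (hfi : Integrable f μ) {N a b : ℝ} (ha : 0 ≤ a)
    (h2 : ∫⁻ x in {x | N < f x}, ENNReal.ofReal (f x) ^ 2 ∂μ ≤ ENNReal.ofReal a ^ 2)
    (h1 : ∫⁻ x in {x | N < f x}, ENNReal.ofReal (f x) ∂μ ≤ ENNReal.ofReal b) :
    ∫ x, f x ^ (3 / 2 : ℝ) ∂μ ≤ a * √b + √N * ∫ x, f x ∂μ := by
  have hI : 0 ≤ ∫ x, f x ∂μ := integral_nonneg hf0
  rw [integral_eq_lintegral_of_nonneg_ae (ae_of_all _ fun x => Real.rpow_nonneg (hf0 x) _)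
    (hf.pow_const _).aestronglyMeasurable]
  refine ENNReal.toReal_le_of_le_ofReal (by positivity) ?_
  refine (lintegral_ofReal_rpow_three_halves_le μ hf hf0 N).trans ?_
  rw [← ofReal_integral_eq_lintegral_ofReal hfi (ae_of_all _ hf0),
    ENNReal.ofReal_add (by positivity) (by positivity),
    ENNReal.ofReal_mul ha, ENNReal.ofReal_mul (by positivity), ENNReal.ofReal_sqrt,
    ENNReal.ofReal_sqrt]
  gcongr
  calc _ ≤ (ENNReal.ofReal a ^ 2) ^ (1 / 2 : ℝ) := by gcongr
    _ = ENNReal.ofReal a := by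
      rw [← ENNReal.rpow_natCast, ← ENNReal.rpow_mul]
      norm_num

end LevelSets

section Entropy

variable {α : Type*} [MeasurableSpace α] {μ : Measure α}

theorem integrable_one_add_mul_log_one_add {f : α → ℝ} (hf0 : ∀ x, 0 ≤ f x) (hfi : Integrable f μ)
    (hf2 : MemLp f 2 μ) : Integrable (fun x => (1 + f x) * Real.log (1 + f x)) μ := by
  refine (hfi.add hf2.integrable_sq).mono'
    (Real.continuous_mul_log.comp_aestronglyMeasurable (hfi.1.const_add 1))
    (ae_of_all _ fun x => ?_)
  have h0 := hf0 x
  have hlog := Real.log_le_sub_one_of_pos (show 0 < 1 + f x by linarith)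
  rw [Real.norm_of_nonneg (mul_nonneg (by linarith) (Real.log_nonneg (by linarith)))]
  simp only [Pi.add_apply]
  nlinarith

theorem setLIntegral_lt_le_ofReal_integral_div_log {f : α → ℝ} (hf : Measurable f)
    (hf0 : ∀ x, 0 ≤ f x)
    (hent : Integrable (fun x => (1 + f x) * Real.log (1 + f x)) μ) {N : ℝ} (hN : 0 < N) :
    ∫⁻ x in {x | N < f x}, ENNReal.ofReal (f x) ∂μ ≤
      ENNReal.ofReal ((∫ x, (1 + f x) * Real.log (1 + f x) ∂μ) / Real.log (1 + N)) := by
  have hL : 0 < Real.log (1 + N) := Real.log_pos (by linarith)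
  rw [ENNReal.ofReal_div_of_pos hL, ENNReal.le_div_iff_mul_le (.inl (by simpa using hL))
    (.inl ENNReal.ofReal_ne_top), ofReal_integral_eq_lintegral_ofReal hent
    (ae_of_all _ fun x => mul_nonneg (by linarith [hf0 x]) (Real.log_nonneg (by linarith [hf0 x]))),
    ← lintegral_mul_const _ hf.ennreal_ofReal]
  calc ∫⁻ x in {x | N < f x}, ENNReal.ofReal (f x) * ENNReal.ofReal (Real.log (1 + N)) ∂μ
      ≤ ∫⁻ x in {x | N < f x}, ENNReal.ofReal ((1 + f x) * Real.log (1 + f x)) ∂μ := by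
        refine setLIntegral_mono (by fun_prop) fun x (hx : N < f x) => ?_
        rw [← ENNReal.ofReal_mul (hf0 x)]
        exact ENNReal.ofReal_le_ofReal (mul_le_mul (by linarith) (Real.log_le_log (by linarith)
          (by linarith)) hL.le (by linarith))
    _ ≤ ∫⁻ x, ENNReal.ofReal ((1 + f x) * Real.log (1 + f x)) ∂μ := setLIntegral_le_lintegral _ _

end Entropy

theorem Real.log_one_add_sq_le {N : ℝ} (hN : 0 ≤ N) :
    Real.log (1 + N ^ 2) ≤ 2 * Real.log (1 + N) :=
  calc Real.log (1 + N ^ 2) ≤ Real.log ((1 + N) ^ 2) :=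
        Real.log_le_log (by positivity) (by nlinarith)
    _ = 2 * Real.log (1 + N) := by rw [Real.log_pow]; norm_num

theorem Real.sqrt_div_log_one_add_le {a N : ℝ} (ha : 0 ≤ a) (hN : 0 < N) :
    √(a / Real.log (1 + N)) ≤ √2 / √(Real.log (1 + N ^ 2)) * √a := by
  have hL : 0 < Real.log (1 + N) := Real.log_pos (by linarith)
  have hL2 : 0 < Real.log (1 + N ^ 2) := Real.log_pos (by nlinarith)
  rw [← Real.sqrt_div' _ hL2.le, ← Real.sqrt_mul (by positivity)]
  refine Real.sqrt_le_sqrt ?_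
  rw [div_mul_eq_mul_div, div_le_div_iff₀ hL hL2]
  nlinarith [Real.log_one_add_sq_le hN.le]

theorem sq_sqrt_one_add_sub_one_le {t : ℝ} (ht : 0 ≤ t) : (√(1 + t) - 1) ^ 2 ≤ t := by
  have h1 : 1 ≤ √(1 + t) := Real.one_le_sqrt.2 (by linarith)
  have h2 := Real.sq_sqrt (show 0 ≤ 1 + t by linarith)
  nlinarith

theorem le_sixteen_mul_sq_sqrt_one_add_sub_one {t : ℝ} (ht : 1 ≤ t) :
    t ≤ 16 * (√(1 + t) - 1) ^ 2 := by
  have h1 : 1 ≤ √(1 + t) := Real.one_le_sqrt.2 (by linarith)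
  have h2 := Real.sq_sqrt (show 0 ≤ 1 + t by linarith)
  nlinarith

section Dirichlet

variable {E : Type*} [NormedAddCommGroup E] [NormedSpace ℝ E]

theorem norm_fderiv_sqrt_one_add_sq_le {f : E → ℝ} {x : E} (hf : DifferentiableAt ℝ f x)
    (hx : 0 ≤ f x) :
    ‖fderiv ℝ (fun y => √(1 + f y)) x‖ ^ 2 ≤ ‖fderiv ℝ f x‖ ^ 2 / (1 + f x) := by
  rw [((hf.hasFDerivAt.const_add 1).sqrt (by positivity)).fderiv, norm_smul, mul_pow,
    Real.norm_of_nonneg (by positivity), div_pow, mul_pow, Real.sq_sqrt (by positivity),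
    div_mul_eq_mul_div, one_pow, one_mul]
  gcongr
  linarith

variable [MeasurableSpace E] [OpensMeasurableSpace E] {μ : Measure E}

theorem setLIntegral_sq_le_of_eLpNorm_four_le {K : ℝ≥0}
    (hK : ∀ g : E → ℝ, Differentiable ℝ g → MemLp g 2 μ →
      eLpNorm g 4 μ ≤ K * eLpNorm (fderiv ℝ g) 2 μ)
    {f : E → ℝ} (hf0 : ∀ x, 0 ≤ f x) (hf : Differentiable ℝ f) (hfi : Integrable f μ)
    (hG : Integrable (fun x => ‖fderiv ℝ f x‖ ^ 2 / (1 + f x)) μ) :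
    ∫⁻ x in {x | 1 ≤ f x}, ENNReal.ofReal (f x) ^ 2 ∂μ ≤
      ENNReal.ofReal (16 * K ^ 2 * ∫ x, ‖fderiv ℝ f x‖ ^ 2 / (1 + f x) ∂μ) ^ 2 := by
  set g : E → ℝ := fun x => √(1 + f x) - 1
  have hg : Differentiable ℝ g := fun x =>
    (((hf x).hasFDerivAt.const_add 1).sqrt (by linarith [hf0 x])).differentiableAt.sub_const 1
  have hgm : Measurable g := hg.continuous.measurable
  have hg2 : MemLp g 2 μ := (memLp_two_iff_integrable_sq hgm.aestronglyMeasurable).2 <|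
    hfi.mono' (by fun_prop) (ae_of_all _ fun x => by
      rw [Real.norm_of_nonneg (sq_nonneg _)]; exact sq_sqrt_one_add_sub_one_le (hf0 x))
  have hDg : ∀ x, ‖fderiv ℝ g x‖ₑ ^ 2 ≤ ENNReal.ofReal (‖fderiv ℝ f x‖ ^ 2 / (1 + f x)) := by
    intro x
    rw [fderiv_sub_const, ← ofReal_norm, ← ENNReal.ofReal_pow (norm_nonneg _)]
    exact ENNReal.ofReal_le_ofReal (norm_fderiv_sqrt_one_add_sq_le (hf x) (hf0 x))
  have h4 : ∫⁻ x, ‖g x‖ₑ ^ 4 ∂μ = eLpNorm g 4 μ ^ 4 := by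
    simpa using (eLpNorm_nnreal_pow_eq_lintegral (f := g) (μ := μ) (p := 4) (by norm_num)).symm
  have h2 : eLpNorm (fderiv ℝ g) 2 μ ^ 2 = ∫⁻ x, ‖fderiv ℝ g x‖ₑ ^ 2 ∂μ := by
    simpa using eLpNorm_nnreal_pow_eq_lintegral (f := fderiv ℝ g) (μ := μ) (p := 2) (by norm_num)
  calc ∫⁻ x in {x | 1 ≤ f x}, ENNReal.ofReal (f x) ^ 2 ∂μ
      ≤ ∫⁻ x in {x | 1 ≤ f x}, (16 * ‖g x‖ₑ ^ 2) ^ 2 ∂μ := by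
        refine setLIntegral_mono (by fun_prop) fun x (hx : 1 ≤ f x) => ?_
        gcongr
        rw [← ofReal_norm, ← ENNReal.ofReal_pow (norm_nonneg _), Real.norm_eq_abs,
          sq_abs, ← ENNReal.ofReal_ofNat, ← ENNReal.ofReal_mul (by norm_num)]
        exact ENNReal.ofReal_le_ofReal (le_sixteen_mul_sq_sqrt_one_add_sub_one hx)
    _ ≤ ∫⁻ x, (16 * ‖g x‖ₑ ^ 2) ^ 2 ∂μ := setLIntegral_le_lintegral _ _
    _ = 16 ^ 2 * eLpNorm g 4 μ ^ 4 := by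
        simp_rw [mul_pow, ← pow_mul]
        rw [lintegral_const_mul _ (by fun_prop), h4]
    _ ≤ 16 ^ 2 * (K * eLpNorm (fderiv ℝ g) 2 μ) ^ 4 := by gcongr; exact hK g hg hg2
    _ = (16 * K ^ 2 * ∫⁻ x, ‖fderiv ℝ g x‖ₑ ^ 2 ∂μ) ^ 2 := by rw [← h2]; ring
    _ ≤ (16 * K ^ 2 * ∫⁻ x, ENNReal.ofReal (‖fderiv ℝ f x‖ ^ 2 / (1 + f x)) ∂μ) ^ 2 := by
        gcongr with x
        exact hDg x
    _ = ENNReal.ofReal (16 * K ^ 2 * ∫ x, ‖fderiv ℝ f x‖ ^ 2 / (1 + f x) ∂μ) ^ 2 := by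
        rw [← ofReal_integral_eq_lintegral_ofReal hG
          (ae_of_all _ fun x => div_nonneg (sq_nonneg _) (by linarith [hf0 x])),
          ENNReal.ofReal_mul (by positivity)]
        norm_num

end Dirichlet

/-- Lemma 3.5 with `p = 3/2`: there exists `C > 0` such that for every nonnegative
`f ∈ W^{1,2}(ℝ⁴) ∩ L¹(ℝ⁴)` and every `N ≥ 1`,
`‖f‖_{3/2}^{3/2} ≤ (C/√(log(1+N²))) ‖(1+f)log(1+f)‖₁^{1/2} ∫ |∇f|²/(1+f) + C N^{1/2} ‖f‖₁`. -/
theorem L_three_halves_entropy_estimate :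
    ∃ C : ℝ, 0 < C ∧
      ∀ f : EuclideanSpace ℝ (Fin 4) → ℝ,
        (∀ x, 0 ≤ f x) →
        Integrable f →
        MemLp f 2 →
        Differentiable ℝ f →
        MemLp (fun x => fderiv ℝ f x) 2 →
        Integrable (fun x => ‖fderiv ℝ f x‖ ^ 2 / (1 + f x)) →
        ∀ N : ℝ, 1 ≤ N →
          (∫ x, (f x) ^ ((3 : ℝ) / 2)) ≤
            C / Real.sqrt (Real.log (1 + N ^ 2)) *
                (∫ x, (1 + f x) * Real.log (1 + f x)) ^ ((1 : ℝ) / 2) *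
                (∫ x, ‖fderiv ℝ f x‖ ^ 2 / (1 + f x))
              + C * N ^ ((1 : ℝ) / 2) * ∫ x, f x := by
  obtain ⟨K, hK⟩ := EuclideanSpace.exists_eLpNorm_four_le_mul_eLpNorm_fderiv_two
  set C : ℝ := 16 * √2 * K ^ 2 + 1
  refine ⟨C, by positivity, fun f hf0 hfi hf2 hf _ hG N hN => ?_⟩
  set G := ∫ x, ‖fderiv ℝ f x‖ ^ 2 / (1 + f x)
  set Ent := ∫ x, (1 + f x) * Real.log (1 + f x)
  have hG0 : 0 ≤ G := integral_nonneg fun x => div_nonneg (sq_nonneg _) (by linarith [hf0 x])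
  have hEnt0 : 0 ≤ Ent := integral_nonneg fun x =>
    mul_nonneg (by linarith [hf0 x]) (Real.log_nonneg (by linarith [hf0 x]))
  have key := integral_rpow_three_halves_le volume hf.continuous.measurable hf0 hfi
    (N := N) (by positivity)
    ((lintegral_mono_set fun x (hx : N < f x) => (hN.trans hx.le : 1 ≤ f x)).trans
      (setLIntegral_sq_le_of_eLpNorm_four_le hK hf0 hf hfi hG))
    (setLIntegral_lt_le_ofReal_integral_div_log hf.continuous.measurable hf0
      (integrable_one_add_mul_log_one_add hf0 hfi hf2) (by linarith))
  rw [← Real.sqrt_eq_rpow, ← Real.sqrt_eq_rpow]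
  refine key.trans (add_le_add ?_ ?_)
  · calc 16 * K ^ 2 * G * √(Ent / Real.log (1 + N))
        ≤ 16 * K ^ 2 * G * (√2 / √(Real.log (1 + N ^ 2)) * √Ent) := by
          gcongr 16 * K ^ 2 * G * ?_
          exact Real.sqrt_div_log_one_add_le hEnt0 (by linarith)
      _ = 16 * √2 * K ^ 2 / √(Real.log (1 + N ^ 2)) * √Ent * G := by ring
      _ ≤ C / √(Real.log (1 + N ^ 2)) * √Ent * G := by
          gcongr
          exact le_add_of_nonneg_right zero_le_one
  · rw [mul_assoc]
    exact le_mul_of_one_le_left (mul_nonneg (Real.sqrt_nonneg _) (integral_nonneg hf0))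
      (le_add_of_nonneg_left (by positivity))
end Cutoff
end

section
/- Assume the sharp Hardy–Littlewood–Sobolev inequality on ℝ⁴: ∬ f(x)|x−y|^{-2}f(y) dx dy ≤ C_HLS ‖f‖_{4/3}² with C_HLS = √(3/2)·π, and the sharp Sobolev inequality ‖f‖_{4/3} ≤ C_S ‖∇f‖_1 with C_S = 2^{1/4}/(4√π). Then for every nonnegative f ∈ W^{1,1}(ℝ⁴) with ∫ |∇f|²/f dx finite, (1/(4π²)) ∬_{ℝ⁴×ℝ⁴} f(x)|x−y|^{-2}f(y) dx dy ≤ (√3/(8π)²) · ‖f‖_1 · ∫_{ℝ⁴} |∇f|²/f dx. In particular C_HLS·C_S²/(4π²) = √3/(8π)². -/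
/-!
Hardy–Littlewood–Sobolev, then Sobolev, then Cauchy–Schwarz in the form
`‖∇f‖₁² ≤ ‖f‖₁ ∫ |∇f|²/f` (write `|∇f| = √f · |∇f|/√f`) give
`∬ f |x-y|⁻² f ≤ C_HLS ‖f‖_{4/3}² ≤ C_HLS C_S² ‖∇f‖₁² ≤ C_HLS C_S² ‖f‖₁ ∫ |∇f|²/f`.

The HLS hypothesis needs `f ∈ L^{4/3}` a priori. For this the Sobolev inequality is applied to
the bounded truncations `c f / (c + f)`, which bounds their `L^{4/3}` norms uniformly, and Fatou's
lemma passes to the limit `c → ∞`.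
-/

open MeasureTheory Real Filter Topology

lemma sqrt_three_halves_mul_pi_mul_sq_div_eq :
    (Real.sqrt (3 / 2) * π) * ((2 : ℝ) ^ ((1 : ℝ) / 4) / (4 * Real.sqrt π)) ^ 2 / (4 * π ^ 2) =
      Real.sqrt 3 / (8 * π) ^ 2 := by
  have h2 : ((2 : ℝ) ^ ((1 : ℝ) / 4)) ^ 2 = Real.sqrt 2 := by
    rw [← Real.rpow_natCast, ← Real.rpow_mul (by norm_num), Real.sqrt_eq_rpow]
    norm_num
  have h3 : Real.sqrt (3 / 2) * Real.sqrt 2 = Real.sqrt 3 := by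
    rw [← Real.sqrt_mul (by norm_num)]
    norm_num
  rw [div_pow, h2, mul_pow, Real.sq_sqrt pi_pos.le, ← h3]
  field_simp
  ring

section CauchySchwarz

variable {α F : Type*} [MeasurableSpace α] {μ : Measure α} [NormedAddCommGroup F]

lemma sq_integral_norm_le_integral_mul_integral_sq_div {g : α → ℝ} {a : α → F}
    (hg0 : ∀ x, 0 ≤ g x) (ha : ∀ x, g x = 0 → a x = 0) (hg : Integrable g μ)
    (hag : Integrable (fun x => ‖a x‖ ^ 2 / g x) μ) :
    (∫ x, ‖a x‖ ∂μ) ^ 2 ≤ (∫ x, g x ∂μ) * ∫ x, ‖a x‖ ^ 2 / g x ∂μ := by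
  have hag0 : ∀ x, 0 ≤ ‖a x‖ ^ 2 / g x := fun x => div_nonneg (sq_nonneg _) (hg0 x)
  have hsqrt_memLp : ∀ {h : α → ℝ}, (∀ x, 0 ≤ h x) → Integrable h μ →
      MemLp (fun x => Real.sqrt (h x)) (ENNReal.ofReal 2) μ := fun h0 hh => by
    rw [ENNReal.ofReal_ofNat, memLp_two_iff_integrable_sq
      (continuous_sqrt.comp_aestronglyMeasurable hh.aestronglyMeasurable)]
    simpa only [Real.sq_sqrt (h0 _)] using hh
  have hsqrt_rpow : ∀ {h : α → ℝ}, (∀ x, 0 ≤ h x) →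
      (∫ x, Real.sqrt (h x) ^ (2 : ℝ) ∂μ) ^ (1 / (2 : ℝ)) = Real.sqrt (∫ x, h x ∂μ) :=
    fun h0 => by
      simp only [Real.rpow_two, fun x => Real.sq_sqrt (h0 x)]
      exact (Real.sqrt_eq_rpow _).symm
  have hprod : ∀ x, Real.sqrt (g x) * Real.sqrt (‖a x‖ ^ 2 / g x) = ‖a x‖ := fun x => by
    have : g x * (‖a x‖ ^ 2 / g x) = ‖a x‖ ^ 2 := by
      rcases eq_or_ne (g x) 0 with h | h
      · simp [h, ha x h]
      · field_simp
    rw [← Real.sqrt_mul (hg0 x), this, Real.sqrt_sq (norm_nonneg _)]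
  have holder := integral_mul_le_Lp_mul_Lq_of_nonneg Real.HolderConjugate.two_two
    (ae_of_all _ fun x => Real.sqrt_nonneg (g x))
    (ae_of_all _ fun x => Real.sqrt_nonneg (‖a x‖ ^ 2 / g x))
    (hsqrt_memLp hg0 hg) (hsqrt_memLp hag0 hag)
  simp only [hprod, hsqrt_rpow hg0, hsqrt_rpow hag0] at holder
  calc (∫ x, ‖a x‖ ∂μ) ^ 2
      ≤ (Real.sqrt (∫ x, g x ∂μ) * Real.sqrt (∫ x, ‖a x‖ ^ 2 / g x ∂μ)) ^ 2 :=
        pow_le_pow_left₀ (integral_nonneg fun x => norm_nonneg _) holder 2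
    _ = (∫ x, g x ∂μ) * ∫ x, ‖a x‖ ^ 2 / g x ∂μ := by
        rw [mul_pow, Real.sq_sqrt (integral_nonneg hg0), Real.sq_sqrt (integral_nonneg hag0)]

end CauchySchwarz

section Truncation

noncomputable def softTruncation (c t : ℝ) : ℝ := c * t / (c + t)

variable {c t : ℝ}

@[fun_prop]
lemma measurable_softTruncation (c : ℝ) : Measurable (softTruncation c) := by
  unfold softTruncation
  fun_prop

lemma softTruncation_nonneg (hc : 0 < c) (ht : 0 ≤ t) : 0 ≤ softTruncation c t := by
  unfold softTruncation
  positivity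

lemma softTruncation_le_self (hc : 0 < c) (ht : 0 ≤ t) : softTruncation c t ≤ t := by
  rw [softTruncation, div_le_iff₀ (by positivity)]
  nlinarith

lemma softTruncation_le_left (hc : 0 < c) (ht : 0 ≤ t) : softTruncation c t ≤ c := by
  rw [softTruncation, div_le_iff₀ (by positivity)]
  nlinarith

lemma tendsto_softTruncation_atTop (ht : 0 ≤ t) :
    Tendsto (fun c => softTruncation c t) atTop (𝓝 t) := by
  have hden : Tendsto (fun c => c + t) atTop atTop := tendsto_atTop_add_const_right _ t tendsto_id
  have hlim : Tendsto (fun c => t - t ^ 2 / (c + t)) atTop (𝓝 (t - 0)) :=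
    tendsto_const_nhds.sub (tendsto_const_nhds.div_atTop hden)
  rw [sub_zero] at hlim
  refine hlim.congr' ((eventually_gt_atTop 0).mono fun c hc => ?_)
  unfold softTruncation
  field_simp
  ring

lemma hasDerivAt_softTruncation (hc : 0 < c) (ht : 0 ≤ t) :
    HasDerivAt (softTruncation c) (c ^ 2 / (c + t) ^ 2) t := by
  have hne : c + t ≠ 0 := by positivity
  have h := ((hasDerivAt_id t).const_mul c).div ((hasDerivAt_id t).const_add c) hne
  refine h.congr_deriv ?_
  simp only [id, mul_one]
  field_simp
  ring

lemma sq_div_sq_add_le_one (hc : 0 < c) (ht : 0 ≤ t) : c ^ 2 / (c + t) ^ 2 ≤ 1 := by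
  rw [div_le_one (by positivity)]
  nlinarith

lemma integrable_softTruncation_comp {α : Type*} [MeasurableSpace α] {μ : Measure α}
    {f : α → ℝ} (hc : 0 < c) (hf0 : ∀ x, 0 ≤ f x) (hfL1 : Integrable f μ) :
    Integrable (fun x => softTruncation c (f x)) μ :=
  hfL1.mono'
    ((measurable_softTruncation c).comp_aemeasurable hfL1.aemeasurable).aestronglyMeasurable
    (ae_of_all _ fun x => (Real.norm_of_nonneg (softTruncation_nonneg hc (hf0 x))).trans_le
      (softTruncation_le_self hc (hf0 x)))

variable {E : Type*} [NormedAddCommGroup E] [NormedSpace ℝ E] {f : E → ℝ}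

lemma hasFDerivAt_softTruncation_comp (hc : 0 < c) (hf0 : ∀ x, 0 ≤ f x)
    (hfd : Differentiable ℝ f) (x : E) :
    HasFDerivAt (fun y => softTruncation c (f y))
      ((c ^ 2 / (c + f x) ^ 2) • fderiv ℝ f x) x :=
  (hasDerivAt_softTruncation hc (hf0 x)).comp_hasFDerivAt x (hfd x).hasFDerivAt

lemma norm_fderiv_softTruncation_comp_le (hc : 0 < c) (hf0 : ∀ x, 0 ≤ f x)
    (hfd : Differentiable ℝ f) (x : E) :
    ‖fderiv ℝ (fun y => softTruncation c (f y)) x‖ ≤ ‖fderiv ℝ f x‖ := by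
  rw [(hasFDerivAt_softTruncation_comp hc hf0 hfd x).fderiv, norm_smul,
    Real.norm_of_nonneg (by positivity)]
  exact mul_le_of_le_one_left (norm_nonneg _) (sq_div_sq_add_le_one hc (hf0 x))

variable [MeasurableSpace E] {μ : Measure E}

lemma integrable_fderiv_softTruncation_comp (hc : 0 < c) (hf0 : ∀ x, 0 ≤ f x)
    (hfL1 : Integrable f μ) (hfd : Differentiable ℝ f)
    (hgradL1 : Integrable (fun x => fderiv ℝ f x) μ) :
    Integrable (fun x => fderiv ℝ (fun y => softTruncation c (f y)) x) μ := by
  refine hgradL1.norm.mono' ?_ (ae_of_all _ (norm_fderiv_softTruncation_comp_le hc hf0 hfd))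
  rw [funext fun x => (hasFDerivAt_softTruncation_comp hc hf0 hfd x).fderiv]
  have hcoef : Measurable fun t : ℝ => c ^ 2 / (c + t) ^ 2 := by fun_prop
  exact (hcoef.comp_aemeasurable hfL1.aemeasurable).aestronglyMeasurable.smul
    hgradL1.aestronglyMeasurable

end Truncation

section Sobolev

lemma MeasureTheory.Integrable.memLp_of_norm_le {α : Type*} [MeasurableSpace α] {μ : Measure α}
    {g : α → ℝ} {c p : ℝ} (hg : Integrable g μ) (hgc : ∀ x, ‖g x‖ ≤ c) (hp : 1 ≤ p) :
    MemLp g (ENNReal.ofReal p) μ := by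
  have hp0 : ENNReal.ofReal p ≠ 0 := (ENNReal.ofReal_pos.2 (by linarith)).ne'
  rw [← integrable_norm_rpow_iff hg.aestronglyMeasurable hp0 ENNReal.ofReal_ne_top,
    ENNReal.toReal_ofReal (by linarith)]
  refine (hg.norm.const_mul (c ^ (p - 1))).mono'
    (hg.aestronglyMeasurable.norm.aemeasurable.pow_const p).aestronglyMeasurable
    (ae_of_all _ fun x => ?_)
  have hgx := norm_nonneg (g x)
  calc ‖‖g x‖ ^ p‖ = ‖g x‖ ^ (p - 1) * ‖g x‖ := by
        rw [Real.norm_of_nonneg (by positivity), ← Real.rpow_add_one' hgx (by linarith)]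
        ring_nf
    _ ≤ c ^ (p - 1) * ‖g x‖ :=
        mul_le_mul_of_nonneg_right (Real.rpow_le_rpow hgx (hgc x) (by linarith)) hgx

variable {E : Type*} [NormedAddCommGroup E] [NormedSpace ℝ E] [MeasurableSpace E]

/-- Bochner integrals of non-integrable functions are `0`, so this says nothing about `g ∉ L^p`. -/
def SobolevInequality (μ : Measure E) (p C : ℝ) : Prop :=
  ∀ g : E → ℝ, Integrable g μ → Differentiable ℝ g → Integrable (fun x => fderiv ℝ g x) μ →
    (∫ x, |g x| ^ p ∂μ) ^ p⁻¹ ≤ C * ∫ x, ‖fderiv ℝ g x‖ ∂μ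

variable {μ : Measure E} {p C : ℝ} {f : E → ℝ}

lemma SobolevInequality.eLpNorm_softTruncation_comp_le (hSob : SobolevInequality μ p C)
    (hp : 1 ≤ p) {c : ℝ} (hc : 0 < c) (hf0 : ∀ x, 0 ≤ f x) (hfL1 : Integrable f μ)
    (hfd : Differentiable ℝ f) (hgradL1 : Integrable (fun x => fderiv ℝ f x) μ) :
    eLpNorm (fun x => softTruncation c (f x)) (ENNReal.ofReal p) μ ≤
      ENNReal.ofReal (|C| * ∫ x, ‖fderiv ℝ f x‖ ∂μ) := by
  have hgL1 := integrable_softTruncation_comp hc hf0 hfL1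
  have hgradL1' := integrable_fderiv_softTruncation_comp hc hf0 hfL1 hfd hgradL1
  have hgLp := hgL1.memLp_of_norm_le (fun x => (Real.norm_of_nonneg
    (softTruncation_nonneg hc (hf0 x))).trans_le (softTruncation_le_left hc (hf0 x))) hp
  have hp0 : ENNReal.ofReal p ≠ 0 := (ENNReal.ofReal_pos.2 (by linarith)).ne'
  rw [hgLp.eLpNorm_eq_integral_rpow_norm hp0 ENNReal.ofReal_ne_top,
    ENNReal.toReal_ofReal (by linarith)]
  refine ENNReal.ofReal_le_ofReal ((hSob _ hgL1 (fun x =>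
    (hasFDerivAt_softTruncation_comp hc hf0 hfd x).differentiableAt) hgradL1').trans ?_)
  gcongr ?_ * ?_
  · exact le_abs_self C
  · exact integral_mono hgradL1'.norm hgradL1.norm
      (norm_fderiv_softTruncation_comp_le hc hf0 hfd)

theorem SobolevInequality.memLp (hSob : SobolevInequality μ p C) (hp : 1 ≤ p)
    (hf0 : ∀ x, 0 ≤ f x) (hfL1 : Integrable f μ) (hfd : Differentiable ℝ f)
    (hgradL1 : Integrable (fun x => fderiv ℝ f x) μ) :
    MemLp f (ENNReal.ofReal p) μ :=
  ⟨hfL1.aestronglyMeasurable, (Lp.eLpNorm_le_of_ae_tendsto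
    ((eventually_gt_atTop 0).mono fun _ hc =>
      hSob.eLpNorm_softTruncation_comp_le hp hc hf0 hfL1 hfd hgradL1)
    (fun c => ((measurable_softTruncation c).comp_aemeasurable
      hfL1.aemeasurable).aestronglyMeasurable)
    (ae_of_all _ fun x => tendsto_softTruncation_atTop (hf0 x))).trans_lt ENNReal.ofReal_lt_top⟩

end Sobolev

/-- Assuming the sharp Hardy–Littlewood–Sobolev inequality on `ℝ⁴` with constant
`C_HLS = √(3/2) π` and the sharp Sobolev inequality `‖g‖_{4/3} ≤ C_S ‖∇g‖₁` with
`C_S = 2^{1/4}/(4√π)`, every nonnegative `f ∈ W^{1,1}(ℝ⁴)` with `∫ |∇f|²/f` finite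
satisfies `(1/(4π²)) ∬ f(x)|x-y|^{-2}f(y) ≤ (√3/(8π)²) ‖f‖₁ ∫ |∇f|²/f`;
moreover `C_HLS C_S²/(4π²) = √3/(8π)²`. -/
theorem hls_riesz_potential_bound
    (hHLS : ∀ g : EuclideanSpace ℝ (Fin 4) → ℝ, (∀ x, 0 ≤ g x) →
      Integrable g → MemLp g (ENNReal.ofReal (4 / 3)) →
      (∫ x, ∫ y, g x * ‖x - y‖ ^ (-(2 : ℝ)) * g y) ≤
        (Real.sqrt (3 / 2) * π) * ((∫ x, (g x) ^ ((4 : ℝ) / 3)) ^ ((3 : ℝ) / 4)) ^ 2)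
    (hSob : ∀ g : EuclideanSpace ℝ (Fin 4) → ℝ,
      Integrable g → Differentiable ℝ g → Integrable (fun x => fderiv ℝ g x) →
      (∫ x, |g x| ^ ((4 : ℝ) / 3)) ^ ((3 : ℝ) / 4) ≤
        ((2 : ℝ) ^ ((1 : ℝ) / 4) / (4 * Real.sqrt π)) * ∫ x, ‖fderiv ℝ g x‖)
    (f : EuclideanSpace ℝ (Fin 4) → ℝ)
    (hf0 : ∀ x, 0 ≤ f x)
    (hfL1 : Integrable f)
    (hfd : Differentiable ℝ f)
    (hgradL1 : Integrable (fun x => fderiv ℝ f x))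
    (hdiss : Integrable (fun x => ‖fderiv ℝ f x‖ ^ 2 / f x)) :
    (1 / (4 * π ^ 2)) * (∫ x, ∫ y, f x * ‖x - y‖ ^ (-(2 : ℝ)) * f y) ≤
        (Real.sqrt 3 / (8 * π) ^ 2) * (∫ x, f x) * ∫ x, ‖fderiv ℝ f x‖ ^ 2 / f x
      ∧ (Real.sqrt (3 / 2) * π) * ((2 : ℝ) ^ ((1 : ℝ) / 4) / (4 * Real.sqrt π)) ^ 2 /
          (4 * π ^ 2) = Real.sqrt 3 / (8 * π) ^ 2 := by
  refine ⟨?_, sqrt_three_halves_mul_pi_mul_sq_div_eq⟩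
  have h34 : ((4 : ℝ) / 3)⁻¹ = 3 / 4 := by norm_num
  have hSob' : SobolevInequality volume (4 / 3) _ := fun g hg hgd hg' =>
    h34 ▸ hSob g hg hgd hg'
  have hmem : MemLp f (ENNReal.ofReal (4 / 3)) := hSob'.memLp (by norm_num) hf0 hfL1 hfd hgradL1
  have hsob := hSob f hfL1 hfd hgradL1
  simp only [abs_of_nonneg (hf0 _)] at hsob
  have hcs := sq_integral_norm_le_integral_mul_integral_sq_div hf0
    (fun x hx => IsLocalMin.fderiv_eq_zero (Eventually.of_forall fun y => hx ▸ hf0 y))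
    hfL1 hdiss
  calc (1 / (4 * π ^ 2)) * (∫ x, ∫ y, f x * ‖x - y‖ ^ (-(2 : ℝ)) * f y)
      ≤ (1 / (4 * π ^ 2)) * ((Real.sqrt (3 / 2) * π) *
          (((2 : ℝ) ^ ((1 : ℝ) / 4) / (4 * Real.sqrt π)) * ∫ x, ‖fderiv ℝ f x‖) ^ 2) := by
        gcongr
        refine (hHLS f hf0 hfL1 hmem).trans ?_
        gcongr
        exact rpow_nonneg (integral_nonneg fun x => rpow_nonneg (hf0 x) _) _
    _ ≤ (1 / (4 * π ^ 2)) * ((Real.sqrt (3 / 2) * π) *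
          (((2 : ℝ) ^ ((1 : ℝ) / 4) / (4 * Real.sqrt π)) ^ 2 *
            ((∫ x, f x) * ∫ x, ‖fderiv ℝ f x‖ ^ 2 / f x))) := by
        rw [mul_pow]
        gcongr
    _ = (Real.sqrt 3 / (8 * π) ^ 2) * (∫ x, f x) * ∫ x, ‖fderiv ℝ f x‖ ^ 2 / f x := by
        rw [← sqrt_three_halves_mul_pi_mul_sq_div_eq]
        ring
end

section
/- Let f ∈ W^{1,2}(ℝ⁴) ∩ L¹(ℝ⁴) be nonnegative and α > 0. Then (f−α)₊ := max{f−α, 0} belongs to W^{1,1}(ℝ⁴) and ‖∇(f−α)₊‖₁ ≤ ((1+α)/α · ‖f‖₁)^{1/2} · (∫_{ℝ⁴} |∇f|²/(1+f) dx)^{1/2}. -/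
open MeasureTheory

/-! Where `f ≤ α` the truncation `(f - α)₊` attains its minimum, so its derivative vanishes; where
`f > α` it agrees with `f - α` near the point. Hence, pointwise,
`|∇(f - α)₊| ≤ (|∇f| / √(1 + f)) · √((1 + α) / α · f)`, because `1 + f ≤ (1 + α) / α · f` on
`{f > α}`. Cauchy–Schwarz applied to the two factors gives the integrability of `∇(f - α)₊`
and the estimate. -/

section Truncation

variable {E : Type*} [NormedAddCommGroup E] [NormedSpace ℝ E] {f : E → ℝ} {α : ℝ} {x : E}

theorem fderiv_max_sub_const_zero_eq_zero_of_le (hx : f x ≤ α) :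
    fderiv ℝ (fun y => max (f y - α) 0) x = 0 :=
  IsLocalMin.fderiv_eq_zero <| Filter.Eventually.of_forall fun y => by
    simp only [max_eq_right (sub_nonpos.2 hx), le_max_right]

theorem fderiv_max_sub_const_zero_eq_fderiv_of_lt (hf : ContinuousAt f x) (hx : α < f x) :
    fderiv ℝ (fun y => max (f y - α) 0) x = fderiv ℝ f x := by
  have hloc : (fun y => max (f y - α) 0) =ᶠ[nhds x] fun y => f y - α := by
    filter_upwards [continuousAt_const.eventually_lt hf hx] with y hy
    exact max_eq_left (sub_nonneg.2 hy.le)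
  rw [hloc.fderiv_eq, fderiv_sub_const]

theorem one_add_le_div_mul {t : ℝ} (hα : 0 < α) (ht : α ≤ t) : 1 + t ≤ (1 + α) / α * t := by
  rw [div_mul_eq_mul_div, le_div_iff₀ hα]
  nlinarith

theorem norm_fderiv_max_sub_const_zero_le (hf : ContinuousAt f x) (hf0 : 0 ≤ f x) (hα : 0 < α) :
    ‖fderiv ℝ (fun y => max (f y - α) 0) x‖ ≤
      √(‖fderiv ℝ f x‖ ^ 2 / (1 + f x)) * √((1 + α) / α * f x) := by
  rcases le_or_gt (f x) α with hx | hx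
  · rw [fderiv_max_sub_const_zero_eq_zero_of_le hx, norm_zero]
    positivity
  · have h1f : 0 < 1 + f x := by linarith
    calc ‖fderiv ℝ (fun y => max (f y - α) 0) x‖ = ‖fderiv ℝ f x‖ := by
          rw [fderiv_max_sub_const_zero_eq_fderiv_of_lt hf hx]
      _ = √(‖fderiv ℝ f x‖ ^ 2 / (1 + f x)) * √(1 + f x) := by
          rw [← Real.sqrt_mul (by positivity), div_mul_cancel₀ _ h1f.ne',
            Real.sqrt_sq (norm_nonneg _)]
      _ ≤ √(‖fderiv ℝ f x‖ ^ 2 / (1 + f x)) * √((1 + α) / α * f x) := by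
          gcongr
          exact one_add_le_div_mul hα hx.le

end Truncation

namespace MeasureTheory

variable {X : Type*} [MeasurableSpace X] {μ : Measure X} {g h : X → ℝ}

theorem Integrable.max_sub_const_zero {α : ℝ} (hg : Integrable g μ) (hα : 0 ≤ α) :
    Integrable (fun x => max (g x - α) 0) μ := by
  refine hg.mono ((hg.1.sub aestronglyMeasurable_const).sup aestronglyMeasurable_const) ?_
  refine Filter.Eventually.of_forall fun x => ?_
  rw [Real.norm_of_nonneg (le_max_right _ _), Real.norm_eq_abs]
  exact max_le (by linarith [le_abs_self (g x)]) (abs_nonneg _)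

theorem Integrable.sqrt_mul_sqrt (hg : Integrable g μ) (hh : Integrable h μ) :
    Integrable (fun x => √(g x) * √(h x)) μ := by
  refine (((hg.abs.add hh.abs).div_const 2)).mono'
    ((Real.continuous_sqrt.comp_aestronglyMeasurable hg.1).mul
      (Real.continuous_sqrt.comp_aestronglyMeasurable hh.1)) ?_
  refine Filter.Eventually.of_forall fun x => ?_
  rw [Real.norm_of_nonneg (by positivity)]
  calc √(g x) * √(h x) ≤ √|g x| * √|h x| := by
        gcongr <;> exact le_abs_self _
    _ ≤ (|g x| + |h x|) / 2 := by
        nlinarith [sq_nonneg (√|g x| - √|h x|), Real.sq_sqrt (abs_nonneg (g x)),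
          Real.sq_sqrt (abs_nonneg (h x))]

theorem Integrable.memLp_two_sqrt (hg : Integrable g μ) (hg0 : 0 ≤ᵐ[μ] g) :
    MemLp (fun x => √(g x)) 2 μ := by
  rw [memLp_two_iff_integrable_sq (Real.continuous_sqrt.comp_aestronglyMeasurable hg.1)]
  exact hg.congr (by filter_upwards [hg0] with x hx; rw [Real.sq_sqrt hx])

theorem integral_sqrt_mul_sqrt_le (hg : Integrable g μ) (hh : Integrable h μ)
    (hg0 : 0 ≤ᵐ[μ] g) (hh0 : 0 ≤ᵐ[μ] h) :
    ∫ x, √(g x) * √(h x) ∂μ ≤ √(∫ x, g x ∂μ) * √(∫ x, h x ∂μ) := by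
  have hsq : ∀ {k : X → ℝ}, 0 ≤ᵐ[μ] k → (fun x => √(k x) ^ (2 : ℝ)) =ᵐ[μ] k := fun hk => by
    filter_upwards [hk] with x hx
    rw [Real.rpow_two, Real.sq_sqrt hx]
  have holder := integral_mul_le_Lp_mul_Lq_of_nonneg Real.HolderConjugate.two_two
    (Filter.Eventually.of_forall fun x => Real.sqrt_nonneg (g x))
    (Filter.Eventually.of_forall fun x => Real.sqrt_nonneg (h x))
    (by simpa using hg.memLp_two_sqrt hg0) (by simpa using hh.memLp_two_sqrt hh0)
  rwa [integral_congr_ae (hsq hg0), integral_congr_ae (hsq hh0), ← Real.sqrt_eq_rpow,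
    ← Real.sqrt_eq_rpow] at holder

end MeasureTheory

theorem truncation_W11_estimate_general
    (f : EuclideanSpace ℝ (Fin 4) → ℝ)
    (hf0 : ∀ x, 0 ≤ f x)
    (hfL1 : Integrable f)
    (hfd : Differentiable ℝ f)
    (hdiss : Integrable (fun x => ‖fderiv ℝ f x‖ ^ 2 / (1 + f x)))
    (α : ℝ) (hα : 0 < α) :
    Integrable (fun x => max (f x - α) 0) ∧
    Integrable (fun x => fderiv ℝ (fun y => max (f y - α) 0) x) ∧
    (∫ x, ‖fderiv ℝ (fun y => max (f y - α) 0) x‖) ≤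
      Real.sqrt ((1 + α) / α * ∫ x, f x) *
        Real.sqrt (∫ x, ‖fderiv ℝ f x‖ ^ 2 / (1 + f x)) := by
  have hbound x := norm_fderiv_max_sub_const_zero_le (α := α) (hfd x).continuousAt (hf0 x) hα
  have hfL1' : Integrable (fun x => (1 + α) / α * f x) := hfL1.const_mul _
  have hdom := hdiss.sqrt_mul_sqrt hfL1'
  have hDint : Integrable (fun x => fderiv ℝ (fun y => max (f y - α) 0) x) :=
    hdom.mono' (measurable_fderiv ℝ _).aestronglyMeasurable (Filter.Eventually.of_forall hbound)
  refine ⟨hfL1.max_sub_const_zero hα.le, hDint, ?_⟩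
  calc (∫ x, ‖fderiv ℝ (fun y => max (f y - α) 0) x‖)
      ≤ ∫ x, √(‖fderiv ℝ f x‖ ^ 2 / (1 + f x)) * √((1 + α) / α * f x) :=
        integral_mono hDint.norm hdom hbound
    _ ≤ √(∫ x, ‖fderiv ℝ f x‖ ^ 2 / (1 + f x)) * √(∫ x, (1 + α) / α * f x) :=
        integral_sqrt_mul_sqrt_le hdiss hfL1'
          (Filter.Eventually.of_forall fun x => div_nonneg (sq_nonneg _) (by linarith [hf0 x]))
          (Filter.Eventually.of_forall fun x => by have := hf0 x; positivity)
    _ = √((1 + α) / α * ∫ x, f x) * √(∫ x, ‖fderiv ℝ f x‖ ^ 2 / (1 + f x)) := by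
        rw [integral_const_mul, mul_comm]

/-- For nonnegative `f ∈ W^{1,2}(ℝ⁴) ∩ L¹(ℝ⁴)` and `α > 0`, the truncation
`(f-α)₊` belongs to `W^{1,1}(ℝ⁴)` and
`‖∇(f-α)₊‖₁ ≤ ((1+α)/α ‖f‖₁)^{1/2} (∫ |∇f|²/(1+f))^{1/2}`. -/
theorem truncation_W11_estimate
    (f : EuclideanSpace ℝ (Fin 4) → ℝ)
    (hf0 : ∀ x, 0 ≤ f x)
    (hfL1 : Integrable f)
    (hfL2 : MemLp f 2)
    (hfd : Differentiable ℝ f)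
    (hgradL2 : MemLp (fun x => fderiv ℝ f x) 2)
    (hdiss : Integrable (fun x => ‖fderiv ℝ f x‖ ^ 2 / (1 + f x)))
    (α : ℝ) (hα : 0 < α) :
    Integrable (fun x => max (f x - α) 0) ∧
    Integrable (fun x => fderiv ℝ (fun y => max (f y - α) 0) x) ∧
    (∫ x, ‖fderiv ℝ (fun y => max (f y - α) 0) x‖) ≤
      Real.sqrt ((1 + α) / α * ∫ x, f x) *
        Real.sqrt (∫ x, ‖fderiv ℝ f x‖ ^ 2 / (1 + f x)) :=
  truncation_W11_estimate_general f hf0 hfL1 hfd hdiss α hα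
end
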